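/- Let φ_i, φ be proper lower semi-continuous convex functions on ℝⁿ with φ_i* ↓ φ* pointwise. Then the recession functions satisfy φ̄_i ↑ φ̄ pointwise on the unit sphere, where φ̄(θ) = lim_{λ→∞} φ(p+λθ)/λ for any p with φ(p) < ∞. -/

import Mathlib

open Filter Topology

/-- `φ : ℝⁿ → (-∞,∞]` is a proper lower semi-continuous convex function. -/
def IsLscConvexFn {n : ℕ} (φ : EuclideanSpace ℝ (Fin n) → EReal) : Prop :=
  LowerSemicontinuous φ ∧ (∀ x, φ x ≠ ⊥) ∧ (∃ x, φ x ≠ ⊤) ∧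
    ∀ x y : EuclideanSpace ℝ (Fin n), ∀ a b : ℝ, 0 < a → 0 < b → a + b = 1 →
      φ (a • x + b • y) ≤ (a : EReal) * φ x + (b : EReal) * φ y

/-- The Legendre transform. -/
noncomputable def legendre {n : ℕ} (φ : EuclideanSpace ℝ (Fin n) → EReal)
    (y : EuclideanSpace ℝ (Fin n)) : EReal :=
  ⨆ x : EuclideanSpace ℝ (Fin n), ((inner ℝ x y : ℝ) : EReal) - φ x

/-- The recession function `φ̄(θ) = sup_{λ>0} (φ(p+λθ) - φ(p))/λ` computed with
base point `p ∈ dom φ`. -/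
noncomputable def recessionFn {n : ℕ} (φ : EuclideanSpace ℝ (Fin n) → EReal)
    (p θ : EuclideanSpace ℝ (Fin n)) : EReal :=
  ⨆ lam : {l : ℝ // 0 < l}, ((lam.1⁻¹ : ℝ) : EReal) * (φ (p + lam.1 • θ) - φ p)

/-!
By Fenchel–Moreau, `φᵢ` and `φ` are their own biconjugates, and conjugation turns infima into
suprema, so `φᵢ* ↓ φ*` gives `φᵢ ↑ φ` pointwise. The chord slopes `(φ(p + λθ) - φ(p)) / λ` of a
convex function increase with `λ`, so they may be compared at large `λ`, where changing the base
value from `ψ(p)` to `χ(p)` costs only `(χ(p) - ψ(p)) / λ`. Hence `ψ ≤ χ` implies `ψ̄ ≤ χ̄`, and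
exchanging the suprema over `λ` and over `i` gives `φ̄ = ⨆ᵢ φ̄ᵢ`.
-/
namespace EReal

lemma coe_sub_le_comm {c : ℝ} {z w : EReal} (h : (c : EReal) - z ≤ w) :
    (c : EReal) - w ≤ z := by
  induction z using EReal.rec <;> induction w using EReal.rec <;> simp_all [← EReal.coe_sub]
  linarith

lemma coe_sub_iInf {ι : Sort*} (c : ℝ) (g : ι → EReal) :
    (c : EReal) - ⨅ i, g i = ⨆ i, ((c : EReal) - g i) := by
  have hcont : ContinuousAt (fun z : EReal => ((c : EReal), -z)) (⨅ i, g i) :=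
    (continuous_const.prodMk continuous_neg).continuousAt
  exact Antitone.map_iInf_of_continuousAt
    ((EReal.continuousAt_add (by simp) (by simp)).comp hcont)
    (fun _ _ h => EReal.sub_le_sub le_rfl h) (EReal.sub_top _)

noncomputable def slopeOrderIso (c : ℝ) {L : ℝ} (hL : 0 < L) : EReal ≃o EReal :=
  Equiv.toOrderIso
    { toFun := fun x => ((L⁻¹ : ℝ) : EReal) * (x - c)
      invFun := fun y => c + (L : EReal) * y
      left_inv := fun x => by
        simp only
        rw [← mul_assoc, ← coe_mul, mul_inv_cancel₀ hL.ne', coe_one, one_mul, add_comm,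
          sub_add_cancel]
      right_inv := fun y => by
        simp only
        rw [add_sub_cancel_left, ← mul_assoc, ← coe_mul, inv_mul_cancel₀ hL.ne', coe_one,
          one_mul] }
    (fun _ _ h => mul_le_mul_of_nonneg_left (sub_le_sub h le_rfl)
      (EReal.coe_nonneg.2 (inv_nonneg.2 hL.le)))
    (fun x y h => show (c : EReal) + L * x ≤ c + L * y from
      add_le_add le_rfl (mul_le_mul_of_nonneg_left h (EReal.coe_nonneg.2 hL.le)))

@[simp] lemma slopeOrderIso_apply (c : ℝ) {L : ℝ} (hL : 0 < L) (x : EReal) :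
    slopeOrderIso c hL x = ((L⁻¹ : ℝ) : EReal) * (x - c) := rfl

@[simp] lemma slopeOrderIso_symm_apply (c : ℝ) {L : ℝ} (hL : 0 < L) (y : EReal) :
    (slopeOrderIso c hL).symm y = c + (L : EReal) * y := rfl

end EReal

def IsConvexFn {E : Type*} [AddCommGroup E] [Module ℝ E] (φ : E → EReal) : Prop :=
  ∀ x y : E, ∀ a b : ℝ, 0 < a → 0 < b → a + b = 1 →
    φ (a • x + b • y) ≤ (a : EReal) * φ x + (b : EReal) * φ y

lemma IsLscConvexFn.isConvexFn {n : ℕ} {φ : EuclideanSpace ℝ (Fin n) → EReal}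
    (hφ : IsLscConvexFn φ) : IsConvexFn φ :=
  hφ.2.2.2

section Epigraph

variable {E : Type*} {φ : E → EReal}

lemma LowerSemicontinuous.isClosed_realEpigraph [TopologicalSpace E]
    (hφ : LowerSemicontinuous φ) : IsClosed {q : E × ℝ | φ q.1 ≤ q.2} :=
  hφ.isClosed_epigraph.preimage (continuous_id.prodMap continuous_coe_real_ereal)

lemma IsConvexFn.convex_realEpigraph [AddCommGroup E] [Module ℝ E] (hφ : IsConvexFn φ) :
    Convex ℝ {q : E × ℝ | φ q.1 ≤ q.2} := by
  refine convex_iff_forall_pos.2 fun q hq q' hq' a b ha hb hab => ?_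
  calc φ (a • q.1 + b • q'.1) ≤ (a : EReal) * φ q.1 + (b : EReal) * φ q'.1 :=
        hφ _ _ a b ha hb hab
    _ ≤ (a : EReal) * q.2 + (b : EReal) * q'.2 :=
        add_le_add (mul_le_mul_of_nonneg_left hq (EReal.coe_nonneg.2 ha.le))
          (mul_le_mul_of_nonneg_left hq' (EReal.coe_nonneg.2 hb.le))
    _ = ((a * q.2 + b * q'.2 : ℝ) : EReal) := by norm_cast

end Epigraph

section Separation

variable {E : Type*} [NormedAddCommGroup E] [InnerProductSpace ℝ E] [CompleteSpace E]

lemma exists_inner_add_mul_eq (f : E × ℝ →L[ℝ] ℝ) :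
    ∃ (y : E) (s : ℝ), ∀ x t, f (x, t) = inner ℝ x y + t * s := by
  refine ⟨(InnerProductSpace.toDual ℝ E).symm (f.comp (.inl ℝ E ℝ)), f (0, 1), fun x t => ?_⟩
  have hxt : (x, t) = (x, 0) + t • ((0 : E), (1 : ℝ)) := by simp
  rw [hxt, map_add, map_smul, real_inner_comm, InnerProductSpace.toDual_symm_apply]
  simp

lemma exists_inner_add_mul_separation {K : Set (E × ℝ)} (hK : Convex ℝ K) (hKc : IsClosed K)
    {q : E × ℝ} (hq : q ∉ K) :
    ∃ (y : E) (s u : ℝ), (∀ z ∈ K, inner ℝ z.1 y + z.2 * s < u) ∧ u < inner ℝ q.1 y + q.2 * s := by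
  obtain ⟨f, u, hfK, hfq⟩ := geometric_hahn_banach_closed_point hK hKc hq
  obtain ⟨y, s, hf⟩ := exists_inner_add_mul_eq f
  exact ⟨y, s, u, fun z hz => hf z.1 z.2 ▸ hfK z hz, hf q.1 q.2 ▸ hfq⟩

end Separation

section Conjugate

variable {n : ℕ} {φ : EuclideanSpace ℝ (Fin n) → EReal}

lemma legendre_anti {f g : EuclideanSpace ℝ (Fin n) → EReal} (h : f ≤ g) :
    legendre g ≤ legendre f :=
  fun _ => iSup_mono fun x => EReal.sub_le_sub le_rfl (h x)

lemma legendre_iInf {ι : Sort*} (g : ι → EuclideanSpace ℝ (Fin n) → EReal) :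
    legendre (⨅ i, g i) = ⨆ i, legendre (g i) := by
  ext
  simp only [legendre, iInf_apply, iSup_apply, EReal.coe_sub_iInf]
  exact iSup_comm

lemma legendre_legendre_le (φ : EuclideanSpace ℝ (Fin n) → EReal) :
    legendre (legendre φ) ≤ φ :=
  fun x => iSup_le fun y => EReal.coe_sub_le_comm <|
    real_inner_comm x y ▸ le_iSup (fun x => ((inner ℝ x y : ℝ) : EReal) - φ x) x

/-- `x ↦ ⟪x, a⟫ - b` lies below `φ`, stated on the epigraph to keep the arithmetic real. -/
def IsAffineMinorant (φ : EuclideanSpace ℝ (Fin n) → EReal) (a : EuclideanSpace ℝ (Fin n))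
    (b : ℝ) : Prop :=
  ∀ x (t : ℝ), φ x ≤ t → inner ℝ x a - b ≤ t

namespace IsAffineMinorant

variable {a : EuclideanSpace ℝ (Fin n)} {b : ℝ}

lemma coe_le (h : IsAffineMinorant φ a b) (x : EuclideanSpace ℝ (Fin n)) :
    ((inner ℝ x a - b : ℝ) : EReal) ≤ φ x :=
  EReal.le_of_forall_lt_iff_le.1 fun t ht => EReal.coe_le_coe_iff.2 (h x t ht.le)

lemma legendre_le (h : IsAffineMinorant φ a b) : legendre φ a ≤ b :=
  iSup_le fun x => EReal.coe_sub_le_comm (h.coe_le x)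

lemma le_legendre_legendre (h : IsAffineMinorant φ a b) (x : EuclideanSpace ℝ (Fin n)) :
    ((inner ℝ x a - b : ℝ) : EReal) ≤ legendre (legendre φ) x :=
  calc ((inner ℝ x a - b : ℝ) : EReal) = ((inner ℝ a x : ℝ) : EReal) - b := by
        rw [real_inner_comm, EReal.coe_sub]
    _ ≤ ((inner ℝ a x : ℝ) : EReal) - legendre φ a := EReal.sub_le_sub le_rfl h.legendre_le
    _ ≤ legendre (legendre φ) x :=
        le_iSup (fun y => ((inner ℝ y x : ℝ) : EReal) - legendre φ y) a

/-- Tilting an affine minorant by a hyperplane that separates `x₀` from the domain of `φ`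
raises its value at `x₀` arbitrarily. -/
lemma exists_gt_of_separation (h : IsAffineMinorant φ a b) {x₀ y : EuclideanSpace ℝ (Fin n)}
    {u : ℝ} (H : ∀ x (t : ℝ), φ x ≤ t → inner ℝ x y < u) (H₀ : u < inner ℝ x₀ y) (r : ℝ) :
    ∃ a' b', IsAffineMinorant φ a' b' ∧ r < inner ℝ x₀ a' - b' := by
  set d := inner ℝ x₀ y - u
  have hd : 0 < d := sub_pos.2 H₀
  set τ := (|r - (inner ℝ x₀ a - b)| + 1) / d
  have hτ : 0 ≤ τ := by positivity
  have hτd : τ * d = |r - (inner ℝ x₀ a - b)| + 1 := div_mul_cancel₀ _ hd.ne'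
  refine ⟨a + τ • y, b + τ * u, fun x t ht => ?_, ?_⟩
  · have := mul_le_mul_of_nonneg_left (H x t ht).le hτ
    rw [inner_add_right, real_inner_smul_right]
    linarith [h x t ht]
  · rw [inner_add_right, real_inner_smul_right]
    linarith [le_abs_self (r - (inner ℝ x₀ a - b))]

end IsAffineMinorant

lemma exists_isAffineMinorant_gt_of_separation {x₀ y : EuclideanSpace ℝ (Fin n)} {r s u : ℝ}
    (hs : s < 0) (H : ∀ x (t : ℝ), φ x ≤ t → inner ℝ x y + t * s < u)
    (H₀ : u < inner ℝ x₀ y + r * s) :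
    ∃ a b, IsAffineMinorant φ a b ∧ r < inner ℝ x₀ a - b := by
  have hs' : 0 < -s := neg_pos.2 hs
  have hval : ∀ x, inner ℝ x ((-s)⁻¹ • y) - u / -s = (inner ℝ x y - u) / -s := fun x => by
    rw [real_inner_smul_right, sub_div, inv_mul_eq_div]
  refine ⟨(-s)⁻¹ • y, u / -s, fun x t ht => ?_, ?_⟩
  · rw [hval, div_le_iff₀ hs']
    linarith [H x t ht]
  · rw [hval, lt_div_iff₀ hs']
    linarith

lemma exists_separation_of_lt (hl : LowerSemicontinuous φ) (hc : IsConvexFn φ)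
    {x₀ : EuclideanSpace ℝ (Fin n)} {r : ℝ} (hr : (r : EReal) < φ x₀) :
    ∃ (y : EuclideanSpace ℝ (Fin n)) (s u : ℝ),
      (∀ x (t : ℝ), φ x ≤ t → inner ℝ x y + t * s < u) ∧ u < inner ℝ x₀ y + r * s := by
  obtain ⟨y, s, u, H, H₀⟩ := exists_inner_add_mul_separation hc.convex_realEpigraph
    hl.isClosed_realEpigraph (q := (x₀, r)) hr.not_ge
  exact ⟨y, s, u, fun x t ht => H (x, t) ht, H₀⟩

/-- A separating hyperplane cannot be tilted upwards, since the epigraph contains vertical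
half-lines over the domain. -/
lemma nonpos_of_separation {x₁ y : EuclideanSpace ℝ (Fin n)} (hx₁ : φ x₁ ≠ ⊤) {s u : ℝ}
    (H : ∀ x (t : ℝ), φ x ≤ t → inner ℝ x y + t * s < u) : s ≤ 0 := by
  by_contra! hs
  set t := max (φ x₁).toReal ((u - inner ℝ x₁ y) / s)
  have hlt := H x₁ t ((EReal.le_coe_toReal hx₁).trans (EReal.coe_le_coe_iff.2 (le_max_left _ _)))
  have hge := mul_le_mul_of_nonneg_right (le_max_right _ _ : (u - inner ℝ x₁ y) / s ≤ t) hs.le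
  rw [div_mul_cancel₀ _ hs.ne'] at hge
  linarith

lemma exists_isAffineMinorant_gt_of_ne_top (hl : LowerSemicontinuous φ) (hc : IsConvexFn φ)
    {x₀ : EuclideanSpace ℝ (Fin n)} (hx₀ : φ x₀ ≠ ⊤) {r : ℝ} (hr : (r : EReal) < φ x₀) :
    ∃ a b, IsAffineMinorant φ a b ∧ r < inner ℝ x₀ a - b := by
  obtain ⟨y, s, u, H, H₀⟩ := exists_separation_of_lt hl hc hr
  -- `(x₀, φ x₀)` lies in the epigraph, strictly above `(x₀, r)`
  have hlt := H x₀ _ (EReal.le_coe_toReal hx₀)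
  have hr' : r < (φ x₀).toReal := EReal.coe_lt_coe_iff.1 (hr.trans_le (EReal.le_coe_toReal hx₀))
  have hs : s < 0 := by nlinarith
  exact exists_isAffineMinorant_gt_of_separation hs H H₀

namespace IsLscConvexFn

lemma exists_isAffineMinorant (hφ : IsLscConvexFn φ) :
    ∃ a b, IsAffineMinorant φ a b := by
  obtain ⟨x₁, hx₁⟩ := hφ.2.2.1
  obtain ⟨a, b, h, -⟩ := exists_isAffineMinorant_gt_of_ne_top hφ.1 hφ.isConvexFn hx₁
    (EReal.coe_lt_coe_iff.2 (sub_one_lt _) |>.trans_le (EReal.coe_toReal_le (hφ.2.1 x₁)))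
  exact ⟨a, b, h⟩

lemma exists_isAffineMinorant_gt (hφ : IsLscConvexFn φ) {x₀ : EuclideanSpace ℝ (Fin n)} {r : ℝ}
    (hr : (r : EReal) < φ x₀) : ∃ a b, IsAffineMinorant φ a b ∧ r < inner ℝ x₀ a - b := by
  obtain ⟨y, s, u, H, H₀⟩ := exists_separation_of_lt hφ.1 hφ.isConvexFn hr
  obtain ⟨x₁, hx₁⟩ := hφ.2.2.1
  rcases (nonpos_of_separation hx₁ H).lt_or_eq with hs | rfl
  · exact exists_isAffineMinorant_gt_of_separation hs H H₀
  · obtain ⟨a, b, h⟩ := hφ.exists_isAffineMinorant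
    simp only [mul_zero, add_zero] at H H₀
    exact h.exists_gt_of_separation H H₀ r

theorem legendre_legendre (hφ : IsLscConvexFn φ) : legendre (legendre φ) = φ :=
  le_antisymm (legendre_legendre_le φ) fun x => EReal.ge_of_forall_gt_iff_ge.1 fun r hr => by
    obtain ⟨a, b, h, hr'⟩ := hφ.exists_isAffineMinorant_gt hr
    exact (EReal.coe_le_coe_iff.2 hr'.le).trans (h.le_legendre_legendre x)

end IsLscConvexFn

end Conjugate

section Recession

variable {n : ℕ} {p θ : EuclideanSpace ℝ (Fin n)}

lemma recessionFn_eq_iSup_slopeOrderIso {φ : EuclideanSpace ℝ (Fin n) → EReal} {c : ℝ}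
    (hc : φ p = c) :
    recessionFn φ p θ = ⨆ l : {l : ℝ // 0 < l}, EReal.slopeOrderIso c l.2 (φ (p + l.1 • θ)) := by
  simp only [recessionFn, hc, EReal.slopeOrderIso_apply]

lemma IsConvexFn.slopeOrderIso_mono {φ : EuclideanSpace ℝ (Fin n) → EReal} (hφ : IsConvexFn φ)
    {c : ℝ} (hc : φ p = c) {l m : ℝ} (hl : 0 < l) (hlm : l ≤ m) :
    EReal.slopeOrderIso c hl (φ (p + l • θ)) ≤
      EReal.slopeOrderIso c (hl.trans_le hlm) (φ (p + m • θ)) := by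
  rcases hlm.eq_or_lt with rfl | hlm
  · rfl
  have hm : 0 < m := hl.trans hlm
  set Y := EReal.slopeOrderIso c hm (φ (p + m • θ))
  have hY : φ (p + m • θ) = c + (m : EReal) * Y :=
    ((EReal.slopeOrderIso c hm).symm_apply_apply _).symm
  set t := l / m
  have ht : 0 < t := div_pos hl hm
  have ht1 : t < 1 := (div_lt_one hm).2 hlm
  have htm : t * m = l := div_mul_cancel₀ _ hm.ne'
  have hpt : t • (p + m • θ) + (1 - t) • p = p + l • θ := by
    rw [smul_add, smul_smul, htm, sub_smul, one_smul]; abel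
  refine (EReal.slopeOrderIso c hl).le_symm_apply.1 ?_
  calc φ (p + l • θ) ≤ (t : EReal) * φ (p + m • θ) + ((1 - t : ℝ) : EReal) * φ p :=
        hpt ▸ hφ _ _ t (1 - t) ht (sub_pos.2 ht1) (by ring)
    _ = c + (l : EReal) * Y := by
        rw [hY, hc]
        induction Y using EReal.rec with
        | bot => simp [EReal.coe_mul_bot_of_pos, hm, hl, ht]
        | top =>
          rw [EReal.coe_mul_top_of_pos hm, EReal.coe_add_top, EReal.coe_mul_top_of_pos ht,
            EReal.coe_mul_top_of_pos hl, EReal.coe_add_top, ← EReal.coe_mul, EReal.top_add_coe]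
        | coe y => norm_cast; rw [← htm]; ring

theorem IsConvexFn.recessionFn_le_of_le {ψ χ : EuclideanSpace ℝ (Fin n) → EReal}
    (hψ : IsConvexFn ψ) (hψp : ψ p ≠ ⊥) (hχp : χ p ≠ ⊤) (hle : ψ ≤ χ) :
    recessionFn ψ p θ ≤ recessionFn χ p θ := by
  obtain ⟨a, ha⟩ : ∃ a : ℝ, ψ p = a :=
    ⟨_, (EReal.coe_toReal (ne_top_of_le_ne_top hχp (hle p)) hψp).symm⟩
  obtain ⟨b, hb⟩ : ∃ b : ℝ, χ p = b :=
    ⟨_, (EReal.coe_toReal hχp (ne_bot_of_le_ne_bot hψp (hle p))).symm⟩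
  rw [recessionFn_eq_iSup_slopeOrderIso ha]
  refine iSup_le fun ⟨l, hl⟩ => EReal.le_of_forall_lt_iff_le.1 fun z hz => ?_
  obtain ⟨ρ, hρ, hρz⟩ := EReal.lt_iff_exists_real_btwn.1 hz
  replace hρz : ρ < z := EReal.coe_lt_coe_iff.1 hρz
  -- the shift `(b - a) / L` between the slopes of `ψ` and `χ` dies out as `L → ∞`
  set L := max l ((b - a) / (z - ρ))
  have hL : 0 < L := hl.trans_le (le_max_left _ _)
  have hba : b - a ≤ L * (z - ρ) := (div_le_iff₀ (sub_pos.2 hρz)).1 (le_max_right _ _)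
  have hχL : χ (p + L • θ) ≤ ((b + L * ρ : ℝ) : EReal) := by
    have hslope : EReal.slopeOrderIso b hL (χ (p + L • θ)) ≤ ρ := by
      refine le_trans ?_ hρ.le
      rw [recessionFn_eq_iSup_slopeOrderIso hb]
      exact le_iSup (fun l : {l : ℝ // 0 < l} => EReal.slopeOrderIso b l.2 (χ (p + l.1 • θ)))
        ⟨L, hL⟩
    simpa using (EReal.slopeOrderIso b hL).le_symm_apply.2 hslope
  calc EReal.slopeOrderIso a hl (ψ (p + l • θ))
      ≤ EReal.slopeOrderIso a hL (ψ (p + L • θ)) := hψ.slopeOrderIso_mono ha hl (le_max_left _ _)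
    _ ≤ EReal.slopeOrderIso a hL ((b + L * ρ : ℝ) : EReal) :=
        (EReal.slopeOrderIso a hL).monotone ((hle _).trans hχL)
    _ = ((L⁻¹ * (b + L * ρ - a) : ℝ) : EReal) := by simp
    _ ≤ z := EReal.coe_le_coe_iff.2 ((inv_mul_le_iff₀ hL).2 (by linarith))

theorem recessionFn_le_iSup {ι : Sort*} {ψ : ι → EuclideanSpace ℝ (Fin n) → EReal}
    {φ : EuclideanSpace ℝ (Fin n) → EReal} (hφ : φ = ⨆ i, ψ i) {c : ℝ} (hc : φ p = c) :
    recessionFn φ p θ ≤ ⨆ i, recessionFn (ψ i) p θ := by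
  have hψp : ∀ i, ψ i p ≤ c := fun i => hc ▸ (hφ ▸ le_iSup ψ i : ψ i ≤ φ) p
  rw [recessionFn_eq_iSup_slopeOrderIso hc]
  refine iSup_le fun l => ?_
  rw [hφ, iSup_apply, OrderIso.map_iSup]
  refine iSup_mono fun i => le_trans ?_ (le_iSup (fun l : {l : ℝ // 0 < l} =>
    ((l.1⁻¹ : ℝ) : EReal) * (ψ i (p + l.1 • θ) - ψ i p)) l)
  exact mul_le_mul_of_nonneg_left (EReal.sub_le_sub le_rfl (hψp i))
    (EReal.coe_nonneg.2 (inv_nonneg.2 l.2.le))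

end Recession

/-- If `φ_i* ↓ φ*` pointwise then the recession functions satisfy `φ̄_i ↑ φ̄`
pointwise on the unit sphere. -/
theorem recession_mono_conv_of_conjugate_mono_conv {n : ℕ}
    (φs : ℕ → EuclideanSpace ℝ (Fin n) → EReal)
    (φ : EuclideanSpace ℝ (Fin n) → EReal)
    (hφs : ∀ i, IsLscConvexFn (φs i)) (hφ : IsLscConvexFn φ)
    (hanti : ∀ y, Antitone fun i => legendre (φs i) y)
    (hconv : ∀ y, Tendsto (fun i => legendre (φs i) y) atTop (nhds (legendre φ y))) :
    ∀ p : EuclideanSpace ℝ (Fin n), φ p ≠ ⊤ →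
      ∀ θ : EuclideanSpace ℝ (Fin n), ‖θ‖ = 1 →
        (Monotone fun i => recessionFn (φs i) p θ) ∧
          Tendsto (fun i => recessionFn (φs i) p θ) atTop
            (nhds (recessionFn φ p θ)) := by
  intro p hp θ _
  have hconj : legendre φ = ⨅ i, legendre (φs i) := funext fun y => by
    rw [iInf_apply]
    exact tendsto_nhds_unique (hconv y) (tendsto_atTop_iInf (hanti y))
  have hsup : φ = ⨆ i, φs i := by
    rw [← hφ.legendre_legendre, hconj, legendre_iInf]
    simp only [(hφs _).legendre_legendre]
  have hmono : Monotone φs := fun i j hij => by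
    rw [← (hφs i).legendre_legendre, ← (hφs j).legendre_legendre]
    exact legendre_anti fun y => hanti y hij
  have hle : ∀ i, φs i ≤ φ := fun i => hsup ▸ le_iSup φs i
  have hrec_mono : Monotone fun i => recessionFn (φs i) p θ := fun i j hij =>
    (hφs i).isConvexFn.recessionFn_le_of_le ((hφs i).2.1 p)
      (ne_top_of_le_ne_top hp (hle j p)) (hmono hij)
  obtain ⟨c, hc⟩ : ∃ c : ℝ, φ p = c := ⟨_, (EReal.coe_toReal hp (hφ.2.1 p)).symm⟩
  have hrec : recessionFn φ p θ = ⨆ i, recessionFn (φs i) p θ :=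
    le_antisymm (recessionFn_le_iSup hsup hc)
      (iSup_le fun i => (hφs i).isConvexFn.recessionFn_le_of_le ((hφs i).2.1 p) hp (hle i))
  exact ⟨hrec_mono, hrec ▸ tendsto_atTop_iSup hrec_mono⟩
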